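/- A bounded operator A on (H²)^⊥ = z̄·conj(H²) is a dual Toeplitz operator (i.e. A = T̃_φ for some φ ∈ L^∞) if and only if it satisfies the equation T̃_z A T̃_{z̄} = A. -/

import Mathlib

noncomputable section

open MeasureTheory Complex ComplexConjugate InnerProductSpace ContinuousLinearMap

namespace GSIO

instance : Fact (0 < 2 * Real.pi) := ⟨by positivity⟩

/-- The circle, modeled as `ℝ / 2πℤ`. -/
abbrev Circ : Type := AddCircle (2 * Real.pi)

/-- Normalized Haar (arc-length) measure on the circle. -/
abbrev μC : Measure Circ := AddCircle.haarAddCircle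

/-- `L²` of the circle. -/
abbrev L2 : Type := Lp ℂ 2 μC

/-- `L^∞` of the circle. -/
abbrev Linf : Type := Lp ℂ ⊤ μC

/-- The Hardy space `H²`: those `L²` functions whose negative Fourier coefficients vanish. -/
def Hardy : Submodule ℂ L2 where
  carrier := {f : L2 | ∀ n : ℤ, n < 0 → fourierCoeff (f : Circ → ℂ) n = 0}
  zero_mem' := by
    intro n hn
    rw [← fourierBasis_repr]
    simp
  add_mem' := by
    intro a b ha hb n hn
    have ha' := ha n hn
    have hb' := hb n hn
    rw [← fourierBasis_repr] at ha' hb' ⊢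
    rw [map_add, lp.coeFn_add, Pi.add_apply, ha', hb', add_zero]
  smul_mem' := by
    intro c a ha n hn
    have ha' := ha n hn
    rw [← fourierBasis_repr] at ha' ⊢
    rw [_root_.map_smul, lp.coeFn_smul, Pi.smul_apply, ha', smul_zero]

theorem isClosed_Hardy : IsClosed (Hardy : Set L2) := by
  have h : (Hardy : Set L2) =
      ⋂ n : {m : ℤ // m < 0}, (fun f : L2 =>
        (innerSL ℂ (fourierBasis (T := 2 * Real.pi) n.1)) f) ⁻¹' {0} := by
    ext f
    simp only [Set.mem_iInter, Set.mem_preimage, Set.mem_singleton_iff, SetLike.mem_coe]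
    constructor
    · intro hf n
      have h1 := hf n.1 n.2
      rw [← fourierBasis_repr, fourierBasis.repr_apply_apply] at h1
      simpa using h1
    · intro hf n hn
      have h1 := hf ⟨n, hn⟩
      rw [← fourierBasis_repr, fourierBasis.repr_apply_apply]
      simpa using h1
  rw [h]
  exact isClosed_iInter fun n =>
    isClosed_singleton.preimage (innerSL ℂ _).continuous

instance : CompleteSpace Hardy := isClosed_Hardy.completeSpace_coe

/-- The Riesz projection `P₊`, i.e. the orthogonal projection of `L²` onto `H²`. -/
def Pp : L2 →L[ℂ] L2 := Hardy.subtypeL.comp (Hardy.orthogonalProjectionOnto)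

/-- `P₋ = I − P₊`. -/
def Pm : L2 →L[ℂ] L2 := ContinuousLinearMap.id ℂ L2 - Pp

/-- The pointwise product of an `L^∞` function with an `L²` function, as an `L²` function. -/
def mulFun (φ : Linf) (x : L2) : L2 :=
  ((Lp.memLp x).smul (p := ⊤) (Lp.memLp φ)).toLp ((φ : Circ → ℂ) • (x : Circ → ℂ))

theorem mulFun_add (φ : Linf) (x y : L2) : mulFun φ (x + y) = mulFun φ x + mulFun φ y := by
  rw [mulFun, mulFun, mulFun, ← MemLp.toLp_add]
  apply MemLp.toLp_congr
  filter_upwards [Lp.coeFn_add x y] with t ht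
  have ht' : ((x + y : L2) : Circ → ℂ) t = (x : Circ → ℂ) t + (y : Circ → ℂ) t := by
    simpa using ht
  simp only [Pi.mul_apply, Pi.smul_apply, Pi.add_apply, smul_eq_mul, ht']
  ring

theorem mulFun_smul (c : ℂ) (φ : Linf) (x : L2) : mulFun φ (c • x) = c • mulFun φ x := by
  rw [mulFun, mulFun, ← MemLp.toLp_const_smul]
  apply MemLp.toLp_congr
  filter_upwards [Lp.coeFn_smul c x] with t ht
  have ht' : ((c • x : L2) : Circ → ℂ) t = c * (x : Circ → ℂ) t := by
    simpa using ht
  simp only [Pi.mul_apply, Pi.smul_apply, smul_eq_mul, ht']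
  ring

theorem norm_mulFun_le (φ : Linf) (x : L2) : ‖mulFun φ x‖ ≤ ‖φ‖ * ‖x‖ := by
  rw [mulFun, Lp.norm_toLp]
  have h := eLpNorm_smul_le_eLpNorm_top_mul_eLpNorm (μ := μC) 2
    (Lp.aestronglyMeasurable x) (φ : Circ → ℂ)
  refine le_trans (ENNReal.toReal_mono ?_ h) ?_
  · exact ENNReal.mul_ne_top (Lp.eLpNorm_ne_top φ) (Lp.eLpNorm_ne_top x)
  · rw [ENNReal.toReal_mul, Lp.norm_def, Lp.norm_def]

/-- The multiplication operator `M_φ` on `L²`, for `φ ∈ L^∞`. -/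
def mul (φ : Linf) : L2 →L[ℂ] L2 :=
  LinearMap.mkContinuous
    { toFun := mulFun φ
      map_add' := mulFun_add φ
      map_smul' := fun c x => mulFun_smul c φ x }
    ‖φ‖ (fun x => norm_mulFun_le φ x)

/-- Pointwise product in `L^∞`. -/
def mulInf (φ ψ : Linf) : Linf :=
  ((Lp.memLp ψ).smul (p := ⊤) (Lp.memLp φ)).toLp ((φ : Circ → ℂ) • (ψ : Circ → ℂ))

/-- Complex conjugation on `L^∞`. -/
def conjInf (φ : Linf) : Linf :=
  (show MemLp (fun t => star ((φ : Circ → ℂ) t)) ⊤ μC from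
    ⟨continuous_star.comp_aestronglyMeasurable (Lp.aestronglyMeasurable φ), by
      rw [eLpNorm_congr_norm_ae (g := (φ : Circ → ℂ))
        (Filter.Eventually.of_forall fun t => norm_star _)]
      exact Lp.eLpNorm_lt_top φ⟩).toLp _

/-- Complex conjugation on `L²`. -/
def conjL2 (x : L2) : L2 :=
  (show MemLp (fun t => star ((x : Circ → ℂ) t)) 2 μC from
    ⟨continuous_star.comp_aestronglyMeasurable (Lp.aestronglyMeasurable x), by
      rw [eLpNorm_congr_norm_ae (g := (x : Circ → ℂ))
        (Filter.Eventually.of_forall fun t => norm_star _)]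
      exact Lp.eLpNorm_lt_top x⟩).toLp _

/-- The inclusion `L^∞ ⊆ L²` (the measure is finite). -/
def toL2 (φ : Linf) : L2 := ((Lp.memLp φ).mono_exponent le_top).toLp φ

/-- The constant function `c` as an element of `L^∞`. -/
def constInf (c : ℂ) : Linf := (memLp_const c).toLp (fun _ => c)

/-- An `L^∞` function is constant (a.e.). -/
def IsConst (φ : Linf) : Prop := ∃ c : ℂ, φ = constInf c

/-- `φ ∈ H^∞ = L^∞ ∩ H²`: the negative Fourier coefficients of `φ` vanish. -/
def MemHinf (φ : Linf) : Prop := ∀ n : ℤ, n < 0 → fourierCoeff (φ : Circ → ℂ) n = 0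

/-- The coordinate function `z` as an element of `L^∞`. -/
def zInf : Linf := fourierLp (T := 2 * Real.pi) ⊤ 1

/-- The function `z̄` as an element of `L^∞`. -/
def zbarInf : Linf := fourierLp (T := 2 * Real.pi) ⊤ (-1)

/-- The antiunitary operator `V : h ↦ z̄ ⬝ conj h` on `L²`. -/
def Vmap (x : L2) : L2 := mul zbarInf (conjL2 x)

/-- `φ₋ = P₋ φ` for `φ ∈ L^∞`, viewed inside `L²`. -/
def mI (φ : Linf) : L2 := Pm (toL2 φ)

/-- The rank-one operator `p ⊗ q : x ↦ ⟪x, q⟫ · p` (the inner product being conjugate-linear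
in `q`). -/
def rankOne {E : Type*} [NormedAddCommGroup E] [InnerProductSpace ℂ E] (p q : E) : E →L[ℂ] E :=
  (innerSL ℂ q).smulRight p

/-- The Hilbert space direct sum `L² ⊕ L²`. -/
abbrev L2sq : Type := WithLp 2 (L2 × L2)

/-- A pair of `L²` functions, viewed as a vector in `L² ⊕ L²`. -/
def pair (x y : L2) : L2sq := (WithLp.equiv 2 (L2 × L2)).symm (x, y)

/-- Notation for the pointwise product in `L^∞`. -/
scoped infixl:70 " ⊙ " => GSIO.mulInf

/-- The Toeplitz operator `T_φ = P₊ M_φ P₊` (viewed as acting on the corner `H²` of `L²`). -/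
def Toeplitz (φ : Linf) : L2 →L[ℂ] L2 := Pp ∘L mul φ ∘L Pp

/-- The Hankel operator `H_φ = P₋ M_φ P₊ : H² → (H²)^⊥` (as a corner operator on `L²`). -/
def Hankel (φ : Linf) : L2 →L[ℂ] L2 := Pm ∘L mul φ ∘L Pp

/-- The dual Toeplitz operator `T̃_φ = P₋ M_φ P₋` on `(H²)^⊥` (as a corner operator on `L²`). -/
def dualToeplitz (φ : Linf) : L2 →L[ℂ] L2 := Pm ∘L mul φ ∘L Pm

/-- The generalized Cauchy singular integral operator with symbol `[[f, u], [g, v]]`: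
`R x = P₊ f P₊ x + P₋ g P₊ x + P₊ u P₋ x + P₋ v P₋ x`. -/
def Rop (f u g v : Linf) : L2 →L[ℂ] L2 :=
  Pp ∘L mul f ∘L Pp + Pm ∘L mul g ∘L Pp + Pp ∘L mul u ∘L Pm + Pm ∘L mul v ∘L Pm

/-- The singular integral operator `S_{f,g} = M_f P₊ + M_g P₋` on `L²`. -/
def Sop (f g : Linf) : L2 →L[ℂ] L2 := mul f ∘L Pp + mul g ∘L Pm



/-- Negation `t ↦ -t` preserves the Haar measure of the circle. -/
theorem mp_neg : MeasurePreserving (fun t : Circ => -t) μC μC :=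
  Measure.measurePreserving_neg μC

/-- Composition with `t ↦ -t` on `L²`. -/
def reflL2 : L2 →L[ℂ] L2 :=
  (Lp.compMeasurePreservingₗᵢ ℂ (fun t : Circ => -t) mp_neg).toContinuousLinearMap

/-- Composition with `t ↦ -t` on `L^∞`: for `φ ∈ L^∞`, `φ̃(z) = φ(z̄)`. -/
def reflInf (φ : Linf) : Linf := Lp.compMeasurePreserving (fun t : Circ => -t) mp_neg φ

/-- `φ* (z) = conj (φ(z̄))`. -/
def starInf (φ : Linf) : Linf := conjInf (reflInf φ)

/-- The flip operator `J : (Jh)(z) = z̄ · h(z̄)` on `L²`. -/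
def Jop : L2 →L[ℂ] L2 := mul zbarInf ∘L reflL2

/-- The Hankel operator `𝕳_φ = P₊ M_φ J` on `H²` (as a corner operator on `L²`). -/
def HankelPlus (φ : Linf) : L2 →L[ℂ] L2 := Pp ∘L mul φ ∘L Jop ∘L Pp

/-- The adjoint `H*_φ` of the Hankel operator `H_φ`. -/
def HankelAdj (φ : Linf) : L2 →L[ℂ] L2 := ContinuousLinearMap.adjoint (Hankel φ)

/-- `θ ∈ L^∞` is an inner function: `θ ∈ H^∞` and `|θ| = 1` a.e. -/
def IsInner (θ : Linf) : Prop := MemHinf θ ∧ ∀ᵐ t ∂μC, ‖(θ : Circ → ℂ) t‖ = 1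

/-- The orthogonal projection of `L²` onto `K_θ^⊥ = θH² ⊕ z̄·conj(H²)`, namely
`P₋ + M_θ P₊ M_{conj θ}`. -/
def Qproj (θ : Linf) : L2 →L[ℂ] L2 := Pm + mul θ ∘L Pp ∘L mul (conjInf θ)

/-!
The conjugation `B ↦ T̃_z B T̃_z̄` acts on Fourier matrix entries by
`⟪e_m, (T̃_z B T̃_z̄) e_n⟫ = ⟪e_{m-1}, B e_{n-1}⟫` for `m, n < 0` (and kills all other entries),
while `⟪e_m, T̃_φ e_n⟫ = φ̂(m - n)` for `m, n < 0`; this gives one direction at once.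

Conversely, a fixed point `A` has entries `c(m - n)` on the negative quadrant and `0` elsewhere.
Bessel's inequality applied to a column of `A` puts `c` in `ℓ²`, so `c` is the coefficient
sequence of some `φ ∈ L²`. The Fejér means of `φ` are quadratic forms of `A`:
`σ_N φ(t) = ⟪x, A x⟫ / N` with `x = ∑_{j<N} e^{ijt} e_{-1-j}` and `‖x‖² = N`, so `|σ_N φ| ≤ ‖A‖`.
Since `σ_N φ → φ` in `L²`, also `|φ| ≤ ‖A‖` a.e., hence `φ ∈ L^∞` and `A = T̃_φ`.
-/

end GSIO

open Filter Topology

section HilbertSpace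

variable {𝕜 E ι : Type*} [RCLike 𝕜] [NormedAddCommGroup E] [InnerProductSpace 𝕜 E]

theorem HilbertBasis.ext_continuousLinearMap_inner (b : HilbertBasis ι 𝕜 E) {S T : E →L[𝕜] E}
    (h : ∀ i j, ⟪b i, S (b j)⟫_𝕜 = ⟪b i, T (b j)⟫_𝕜) : S = T := by
  refine ContinuousLinearMap.ext_on
    (Submodule.dense_iff_topologicalClosure_eq_top.mpr b.dense_span) ?_
  rintro _ ⟨j, rfl⟩
  exact b.repr.injective (lp.ext (funext fun i => by simp only [b.repr_apply_apply, h i j]))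

theorem HilbertBasis.hasSum_norm_sq_repr (b : HilbertBasis ι 𝕜 E) (x : E) :
    HasSum (fun i => ‖b.repr x i‖ ^ 2) (‖x‖ ^ 2) := by
  have h := lp.hasSum_norm (p := 2) (by norm_num) (b.repr x)
  simpa only [ENNReal.toReal_ofNat, Real.rpow_two, LinearIsometryEquiv.norm_map] using h

theorem HilbertBasis.tendsto_of_repr_eq_mul {α : Type*} {l : Filter α}
    (b : HilbertBasis ι 𝕜 E) {x : E} {y : α → E} {w : α → ι → 𝕜}
    (hy : ∀ a i, b.repr (y a) i = w a i * b.repr x i) (hw : ∀ a i, ‖w a i‖ ≤ 1)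
    (hlim : ∀ i, Tendsto (w · i) l (𝓝 1)) : Tendsto y l (𝓝 x) := by
  have hrepr : ∀ a i, b.repr (y a - x) i = (w a i - 1) * b.repr x i := fun a i => by
    rw [map_sub, lp.coeFn_sub, Pi.sub_apply, hy, sub_one_mul]
  have hbound : ∀ a i, ‖‖(w a i - 1) * b.repr x i‖ ^ 2‖ ≤ 2 ^ 2 * ‖b.repr x i‖ ^ 2 := by
    intro a i
    have : ‖w a i - 1‖ ≤ 2 := (norm_sub_le _ _).trans (by rw [norm_one]; linarith [hw a i])
    rw [norm_pow, norm_norm, norm_mul, mul_pow]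
    gcongr
  have hsq : Tendsto (fun a => ‖y a - x‖ ^ 2) l (𝓝 0) := by
    simp_rw [← (b.hasSum_norm_sq_repr _).tsum_eq, hrepr]
    simpa using tendsto_tsum_of_dominated_convergence (𝓕 := l) (g := fun _ => 0)
      ((b.hasSum_norm_sq_repr x).summable.mul_left _)
      (fun i => by simpa using (((hlim i).sub_const 1).mul_const (b.repr x i)).norm.pow 2)
      (Eventually.of_forall hbound)
  refine tendsto_iff_norm_sub_tendsto_zero.mpr ?_
  simpa [Real.sqrt_sq (norm_nonneg _)] using hsq.sqrt

theorem Orthonormal.norm_sum_sum_inner_le {v : ι → E} (hv : Orthonormal 𝕜 v) (A : E →L[𝕜] E)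
    (s : Finset ι) (l : ι → 𝕜) :
    ‖∑ k ∈ s, ∑ j ∈ s, conj (l k) * l j * ⟪v k, A (v j)⟫_𝕜‖ ≤ ‖A‖ * ∑ j ∈ s, ‖l j‖ ^ 2 := by
  set x := ∑ j ∈ s, l j • v j
  have hform : ⟪x, A x⟫_𝕜 = ∑ k ∈ s, ∑ j ∈ s, conj (l k) * l j * ⟪v k, A (v j)⟫_𝕜 := by
    simp only [x, map_sum, map_smul, sum_inner, inner_sum, inner_smul_left, inner_smul_right,
      Finset.mul_sum]
    rw [Finset.sum_comm]
    exact Finset.sum_congr rfl fun k _ => Finset.sum_congr rfl fun j _ => by ring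
  have hnorm : ‖x‖ ^ 2 = ∑ j ∈ s, ‖l j‖ ^ 2 := by
    have h := hv.inner_sum l l s
    simp_rw [inner_self_eq_norm_sq_to_K, RCLike.conj_mul] at h
    exact_mod_cast h
  calc _ = ‖⟪x, A x⟫_𝕜‖ := by rw [hform]
    _ ≤ ‖x‖ * (‖A‖ * ‖x‖) := (norm_inner_le_norm _ _).trans (by gcongr; exact A.le_opNorm x)
    _ = ‖A‖ * ∑ j ∈ s, ‖l j‖ ^ 2 := by rw [← hnorm]; ring

end HilbertSpace

theorem MeasureTheory.Lp.ae_norm_le_of_tendsto {α F : Type*} [MeasurableSpace α]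
    {μ : Measure α} [NormedAddCommGroup F] {p : ENNReal} [Fact (1 ≤ p)]
    {f : ℕ → Lp F p μ} {g : Lp F p μ} (hfg : Tendsto f atTop (𝓝 g)) {C : ℝ}
    (hf : ∀ n, ∀ᵐ x ∂μ, ‖f n x‖ ≤ C) : ∀ᵐ x ∂μ, ‖g x‖ ≤ C := by
  obtain ⟨ns, -, hns⟩ := (tendstoInMeasure_of_tendsto_Lp hfg).exists_seq_tendsto_ae
  filter_upwards [hns, ae_all_iff.mpr fun i => hf (ns i)] with x hx hfx
  exact le_of_tendsto' hx.norm hfx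

section ToeplitzMatrix

/-- The entry of the `k`-th diagonal of `a` nearest to the corner `(-1, -1)` of the quadrant of
negative indices. -/
def negDiag {α : Type*} (a : ℤ → ℤ → α) (k : ℤ) : α := a (min k 0 - 1) (min (-k) 0 - 1)

theorem eq_negDiag_of_shift {α : Type*} {a : ℤ → ℤ → α}
    (h : ∀ m n, m < 0 → n < 0 → a (m - 1) (n - 1) = a m n) {m n : ℤ} (hm : m < 0) (hn : n < 0) :
    a m n = negDiag a (m - n) := by
  have hshift : ∀ t : ℕ, ∀ m n, m < 0 → n < 0 → a (m - t) (n - t) = a m n := by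
    intro t
    induction t with
    | zero => simp
    | succ t ih =>
      intro m n hm hn
      push_cast
      rw [← sub_sub, ← sub_sub, h _ _ (by omega) (by omega), ih m n hm hn]
  have ht := hshift (min (m - n) 0 - 1 - m).toNat _ _
    (show min (m - n) 0 - 1 < 0 by omega) (show min (-(m - n)) 0 - 1 < 0 by omega)
  rw [Int.toNat_of_nonneg (by omega)] at ht
  rw [negDiag, ← ht]
  congr 1 <;> omega

def diagCount (N : ℕ) (m : ℤ) : ℕ :=
  ((Finset.range N ×ˢ Finset.range N).filter fun p => (p.2 : ℤ) - p.1 = m).card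

theorem diagCount_eq_card_Ico (N : ℕ) (m : ℤ) :
    diagCount N m = (Finset.Ico (max 0 (-m)) (min (N : ℤ) (N - m))).card := by
  apply Finset.card_bij' (fun p _ => (p.1 : ℤ)) (fun k _ => (k.toNat, (k + m).toNat))
  all_goals
    intro p hp
    simp only [Finset.mem_filter, Finset.mem_product, Finset.mem_range, Finset.mem_Ico] at hp ⊢
  · omega
  · omega
  · ext
    · simp
    · simp; omega
  · simp; omega

theorem diagCount_le (N : ℕ) (m : ℤ) : diagCount N m ≤ N := by
  have h := diagCount_eq_card_Ico N m
  rw [Int.card_Ico] at h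
  omega

theorem diagCount_eq_sub {N : ℕ} {m : ℤ} (h : m.natAbs ≤ N) :
    (diagCount N m : ℤ) = N - m.natAbs := by
  have h2 := diagCount_eq_card_Ico N m
  rw [Int.card_Ico] at h2
  omega

theorem norm_diagCount_div_le (N : ℕ) (m : ℤ) : ‖(diagCount N m : ℂ) / N‖ ≤ 1 := by
  rw [norm_div, Complex.norm_natCast, Complex.norm_natCast]
  exact div_le_one_of_le₀ (by exact_mod_cast diagCount_le N m) (Nat.cast_nonneg N)

theorem tendsto_diagCount_div (m : ℤ) :
    Tendsto (fun N : ℕ => (diagCount N m : ℂ) / N) atTop (𝓝 1) := by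
  have h := (tendsto_const_div_atTop_nhds_zero_nat (m.natAbs : ℂ)).const_sub 1
  rw [sub_zero] at h
  refine h.congr' ?_
  filter_upwards [eventually_ge_atTop (max 1 m.natAbs)] with N hN
  have hN0 : (N : ℂ) ≠ 0 := by norm_cast; omega
  have hcount : (diagCount N m : ℂ) = N - m.natAbs := by
    exact_mod_cast diagCount_eq_sub (m := m) (by omega)
  rw [hcount, sub_div, div_self hN0]

end ToeplitzMatrix

section Fourier

variable {T : ℝ}

variable (T) in
/-- The `N`-th Fejér mean `∑_{|m| < N} (1 - |m|/N) c_m e_m` of the series `∑ c_m e_m`, written as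
`N⁻¹ ∑_{j,k<N} c_{j-k} e_{j-k}`. -/
def fejerPoly (c : ℤ → ℂ) (N : ℕ) : C(AddCircle T, ℂ) :=
  (N : ℂ)⁻¹ • ∑ p ∈ Finset.range N ×ˢ Finset.range N, c (p.2 - p.1) • fourier (p.2 - p.1)

theorem fejerPoly_apply (c : ℤ → ℂ) (N : ℕ) (t : AddCircle T) :
    fejerPoly T c N t = (N : ℂ)⁻¹ *
      ∑ p ∈ Finset.range N ×ˢ Finset.range N, c (p.2 - p.1) * fourier (p.2 - p.1) t := by
  simp [fejerPoly]

variable [Fact (0 < T)]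

theorem inner_fourierBasis (n : ℤ) (f : Lp ℂ 2 (AddCircle.haarAddCircle (T := T))) :
    ⟪fourierBasis n, f⟫_ℂ = fourierCoeff f n := by
  rw [← fourierBasis_repr, fourierBasis.repr_apply_apply]

theorem fourierCoeff_fourierBasis (n : ℤ) :
    fourierCoeff (fourierBasis (T := T) n) = Pi.single n 1 := by
  rw [coe_fourierBasis, fourierCoeff_congr_ae (coeFn_fourierLp 2 n), fourierCoeff_fourier]

theorem fourierCoeff_fourier_mul (j : ℤ) (f : AddCircle T → ℂ) (m : ℤ) :
    fourierCoeff (fun t => fourier j t * f t) m = fourierCoeff f (m - j) := by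
  simp only [fourierCoeff, smul_eq_mul, ← mul_assoc, ← fourier_add]
  congr 4
  ring

variable (T) in
def fejerMean (c : ℤ → ℂ) (N : ℕ) : Lp ℂ 2 (AddCircle.haarAddCircle (T := T)) :=
  ContinuousMap.toLp 2 AddCircle.haarAddCircle ℂ (fejerPoly T c N)

theorem fourierBasis_repr_fejerMean (c : ℤ → ℂ) (N : ℕ) (m : ℤ) :
    fourierBasis.repr (fejerMean T c N) m = (diagCount N m : ℂ) / N * c m := by
  have hmean : fejerMean T c N = (N : ℂ)⁻¹ • ∑ p ∈ Finset.range N ×ˢ Finset.range N,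
      c (p.2 - p.1) • fourierBasis (p.2 - p.1) := by
    simp [fejerMean, fejerPoly, coe_fourierBasis]
  classical
  rw [fourierBasis.repr_apply_apply, hmean, inner_smul_right, inner_sum]
  simp_rw [inner_smul_right, orthonormal_iff_ite.mp fourierBasis.orthonormal, mul_ite, mul_one,
    mul_zero, eq_comm (a := m)]
  rw [← Finset.sum_filter, Finset.sum_congr rfl fun p hp => by rw [(Finset.mem_filter.mp hp).2],
    Finset.sum_const, nsmul_eq_mul, diagCount]
  ring

theorem tendsto_fejerMean (c : lp (fun _ : ℤ => ℂ) 2) :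
    Tendsto (fejerMean T c) atTop (𝓝 (fourierBasis.repr.symm c)) :=
  fourierBasis.tendsto_of_repr_eq_mul
    (fun N m => by rw [fourierBasis_repr_fejerMean, LinearIsometryEquiv.apply_symm_apply])
    norm_diagCount_div_le tendsto_diagCount_div

end Fourier

namespace GSIO

local notation "𝐞" => fourierBasis (T := 2 * Real.pi)

theorem Pp_apply (x : L2) : Pp x = Hardy.starProjection x := rfl

theorem Pm_fourierBasis (n : ℤ) : Pm (𝐞 n) = if n < 0 then 𝐞 n else 0 := by
  rw [Pm, sub_apply, id_apply, Pp_apply]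
  split_ifs with hn
  · rw [sub_eq_self]
    refine Hardy.starProjection_apply_eq_zero_iff.mpr fun f hf => ?_
    rw [← inner_conj_symm, inner_fourierBasis, hf n hn, map_zero]
  · rw [sub_eq_zero, eq_comm]
    refine Hardy.starProjection_eq_self_iff.mpr fun m hm => ?_
    rw [fourierCoeff_fourierBasis, Pi.single_apply, if_neg (by omega)]

theorem inner_fourierBasis_Pm (m : ℤ) (x : L2) :
    ⟪𝐞 m, Pm x⟫_ℂ = if m < 0 then ⟪𝐞 m, x⟫_ℂ else 0 := by
  have hsymm : ⟪𝐞 m, Pm x⟫_ℂ = ⟪Pm (𝐞 m), x⟫_ℂ := by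
    simp only [Pm, sub_apply, id_apply, inner_sub_left, inner_sub_right, Pp_apply,
      Submodule.inner_starProjection_left_eq_right]
  rw [hsymm, Pm_fourierBasis]
  split_ifs <;> simp

theorem coeFn_mul (φ : Linf) (x : L2) : mul φ x =ᵐ[μC] fun t => φ t * x t := by
  change ⇑(mulFun φ x) =ᵐ[μC] _
  exact MemLp.coeFn_toLp _

theorem fourierCoeff_mul_fourierBasis (φ : Linf) (n m : ℤ) :
    fourierCoeff (mul φ (𝐞 n)) m = fourierCoeff φ (m - n) := by
  rw [fourierCoeff_congr_ae (coeFn_mul φ (𝐞 n)), ← fourierCoeff_fourier_mul n]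
  refine congrFun (fourierCoeff_congr_ae ?_) m
  filter_upwards [coeFn_fourierLp 2 n] with t ht
  rw [coe_fourierBasis, ht, mul_comm]

theorem fourierCoeff_mul_zInf (x : L2) (m : ℤ) :
    fourierCoeff (mul zInf x) m = fourierCoeff x (m - 1) := by
  rw [← fourierCoeff_fourier_mul 1, fourierCoeff_congr_ae (coeFn_mul zInf x)]
  refine congrFun (fourierCoeff_congr_ae ?_) m
  filter_upwards [coeFn_fourierLp (T := 2 * Real.pi) ⊤ 1] with t ht
  rw [zInf, ht]

theorem mul_zbarInf_fourierBasis (n : ℤ) : mul zbarInf (𝐞 n) = 𝐞 (n - 1) := by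
  refine fourierBasis.repr.injective (lp.ext (funext fun m => ?_))
  rw [fourierBasis_repr, fourierBasis_repr, fourierCoeff_mul_fourierBasis,
    fourierCoeff_fourierBasis, zbarInf, fourierCoeff_congr_ae (coeFn_fourierLp ⊤ (-1)), fourierCoeff_fourier]
  simp only [Pi.single_apply]
  congr 1
  simp only [eq_iff_iff]
  omega

def HasDualToeplitzMatrix (A : L2 →L[ℂ] L2) (c : ℤ → ℂ) : Prop :=
  ∀ m n, ⟪𝐞 m, A (𝐞 n)⟫_ℂ = if m < 0 ∧ n < 0 then c (m - n) else 0

theorem hasDualToeplitzMatrix_dualToeplitz (φ : Linf) :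
    HasDualToeplitzMatrix (dualToeplitz φ) (fourierCoeff φ) := fun m n => by
  simp only [dualToeplitz, comp_apply, inner_fourierBasis_Pm, Pm_fourierBasis]
  by_cases hm : m < 0 <;> by_cases hn : n < 0 <;>
    simp only [hm, hn, and_self, and_true, and_false, if_true, if_false, map_zero,
      inner_zero_right, inner_fourierBasis, fourierCoeff_mul_fourierBasis]

theorem dualToeplitz_zbarInf_fourierBasis (n : ℤ) :
    dualToeplitz zbarInf (𝐞 n) = if n < 0 then 𝐞 (n - 1) else 0 := by
  simp only [dualToeplitz, comp_apply, Pm_fourierBasis]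
  split_ifs with hn
  · rw [mul_zbarInf_fourierBasis, Pm_fourierBasis, if_pos (by omega)]
  · rw [map_zero, map_zero]

theorem inner_fourierBasis_dualToeplitz_zInf (m : ℤ) (x : L2) :
    ⟪𝐞 m, dualToeplitz zInf x⟫_ℂ = if m < 0 then ⟪𝐞 (m - 1), x⟫_ℂ else 0 := by
  simp only [dualToeplitz, comp_apply, inner_fourierBasis_Pm]
  split_ifs with hm
  · rw [inner_fourierBasis, fourierCoeff_mul_zInf, ← inner_fourierBasis, inner_fourierBasis_Pm,
      if_pos (by omega)]
  · rfl

theorem inner_fourierBasis_dualToeplitz_conj (B : L2 →L[ℂ] L2) (m n : ℤ) :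
    ⟪𝐞 m, (dualToeplitz zInf ∘L B ∘L dualToeplitz zbarInf) (𝐞 n)⟫_ℂ =
      if m < 0 ∧ n < 0 then ⟪𝐞 (m - 1), B (𝐞 (n - 1))⟫_ℂ else 0 := by
  simp only [comp_apply, inner_fourierBasis_dualToeplitz_zInf, dualToeplitz_zbarInf_fourierBasis]
  by_cases hm : m < 0 <;> by_cases hn : n < 0 <;>
    simp only [hm, hn, and_self, and_true, and_false, if_true, if_false, map_zero,
      inner_zero_right]

theorem HasDualToeplitzMatrix.conj {A : L2 →L[ℂ] L2} {c : ℤ → ℂ} (hA : HasDualToeplitzMatrix A c) :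
    HasDualToeplitzMatrix (dualToeplitz zInf ∘L A ∘L dualToeplitz zbarInf) c := fun m n => by
  rw [inner_fourierBasis_dualToeplitz_conj, hA]
  by_cases hmn : m < 0 ∧ n < 0
  · rw [if_pos hmn, if_pos ⟨by omega, by omega⟩, if_pos hmn, sub_sub_sub_cancel_right]
  · rw [if_neg hmn, if_neg hmn]

theorem hasDualToeplitzMatrix_of_conj_eq {A : L2 →L[ℂ] L2}
    (h : dualToeplitz zInf ∘L A ∘L dualToeplitz zbarInf = A) :
    HasDualToeplitzMatrix A (negDiag fun m n => ⟪𝐞 m, A (𝐞 n)⟫_ℂ) := fun m n => by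
  have hentry : ∀ m n, ⟪𝐞 m, A (𝐞 n)⟫_ℂ =
      if m < 0 ∧ n < 0 then ⟪𝐞 (m - 1), A (𝐞 (n - 1))⟫_ℂ else 0 := fun m n => by
    conv_lhs => rw [← h]
    exact inner_fourierBasis_dualToeplitz_conj A m n
  split_ifs with hmn
  · refine eq_negDiag_of_shift (a := fun m n => ⟪𝐞 m, A (𝐞 n)⟫_ℂ) (fun m n hm hn => ?_) hmn.1 hmn.2
    rw [hentry m n, if_pos ⟨hm, hn⟩]
  · rw [hentry, if_neg hmn]

namespace HasDualToeplitzMatrix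

variable {A : L2 →L[ℂ] L2} {c : ℤ → ℂ}

theorem eq_dualToeplitz (hA : HasDualToeplitzMatrix A c) {φ : Linf} (hφ : fourierCoeff φ = c) :
    A = dualToeplitz φ :=
  fourierBasis.ext_continuousLinearMap_inner fun m n => by
    rw [hA, hasDualToeplitzMatrix_dualToeplitz, hφ]

theorem sum_norm_sq_le (hA : HasDualToeplitzMatrix A c) (F : Finset ℤ) :
    ∑ k ∈ F, ‖c k‖ ^ 2 ≤ ‖A‖ ^ 2 := by
  obtain ⟨M, hM⟩ := F.bddAbove
  set D := -1 - max M 0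
  have hc : ∀ k ∈ F, c k = ⟪𝐞 (k + D), A (𝐞 D)⟫_ℂ := fun k hk => by
    have hkM : k ≤ M := hM hk
    rw [hA, if_pos ⟨by omega, by omega⟩, add_sub_cancel_right]
  calc ∑ k ∈ F, ‖c k‖ ^ 2 = ∑ k ∈ F, ‖⟪𝐞 (k + D), A (𝐞 D)⟫_ℂ‖ ^ 2 :=
        Finset.sum_congr rfl fun k hk => by rw [hc k hk]
    _ ≤ ‖A (𝐞 D)‖ ^ 2 :=
        (fourierBasis.orthonormal.comp _ (add_left_injective D)).sum_inner_products_le _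
    _ ≤ ‖A‖ ^ 2 := by
        gcongr
        exact (A.le_opNorm (𝐞 D)).trans_eq (by rw [fourierBasis.orthonormal.1 D, mul_one])

theorem memℓp (hA : HasDualToeplitzMatrix A c) : Memℓp c 2 :=
  memℓp_gen' (C := ‖A‖ ^ 2) fun F => by simpa [Real.rpow_two] using hA.sum_norm_sq_le F

theorem norm_fejerPoly_le (hA : HasDualToeplitzMatrix A c) (N : ℕ) (t : Circ) :
    ‖fejerPoly (2 * Real.pi) c N t‖ ≤ ‖A‖ := by
  have hv : Orthonormal ℂ fun j : ℕ => 𝐞 (-1 - j) :=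
    fourierBasis.orthonormal.comp _ fun a b hab => by simpa using hab
  have hsum : ∑ p ∈ Finset.range N ×ˢ Finset.range N, c (p.2 - p.1) * fourier (p.2 - p.1) t =
      ∑ k ∈ Finset.range N, ∑ j ∈ Finset.range N,
        conj (fourier k t) * fourier j t * ⟪𝐞 (-1 - k), A (𝐞 (-1 - j))⟫_ℂ := by
    rw [Finset.sum_product]
    refine Finset.sum_congr rfl fun k _ => Finset.sum_congr rfl fun j _ => ?_
    rw [hA, if_pos ⟨by omega, by omega⟩, ← fourier_neg, ← fourier_add, mul_comm,
      show (-1 - k : ℤ) - (-1 - j) = j - k by ring, neg_add_eq_sub]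
  have hform := hv.norm_sum_sum_inner_le A (Finset.range N) fun j => fourier j t
  have hnorm : ∀ j : ℕ, ‖fourier (j : ℤ) t‖ ^ 2 = 1 := fun j => by
    rw [fourier_apply, Circle.norm_coe, one_pow]
  rw [← hsum, Finset.sum_congr rfl fun j _ => hnorm j, Finset.sum_const, Finset.card_range,
    nsmul_eq_mul, mul_one] at hform
  rw [fejerPoly_apply, norm_mul, norm_inv, Complex.norm_natCast]
  rcases N.eq_zero_or_pos with rfl | hN
  · simp
  · rw [inv_mul_le_iff₀ (by exact_mod_cast hN)]
    linarith

theorem exists_fourierCoeff_eq (hA : HasDualToeplitzMatrix A c) :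
    ∃ φ : Linf, fourierCoeff φ = c := by
  set f : L2 := fourierBasis.repr.symm ⟨c, hA.memℓp⟩
  have hbound : ∀ᵐ t ∂μC, ‖f t‖ ≤ ‖A‖ :=
    Lp.ae_norm_le_of_tendsto (tendsto_fejerMean _) fun N =>
      (ContinuousMap.coeFn_toLp _ _).mono fun t ht => ht ▸ hA.norm_fejerPoly_le N t
  refine ⟨(memLp_top_of_bound (Lp.aestronglyMeasurable f) _ hbound).toLp f, funext fun k => ?_⟩
  rw [fourierCoeff_congr_ae (MemLp.coeFn_toLp _), ← fourierBasis_repr,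
    LinearIsometryEquiv.apply_symm_apply]

end HasDualToeplitzMatrix

theorem statement3_general (A : L2 →L[ℂ] L2) :
    (∃ φ : Linf, A = dualToeplitz φ) ↔ dualToeplitz zInf ∘L A ∘L dualToeplitz zbarInf = A := by
  refine ⟨?_, fun h => ?_⟩
  · rintro ⟨φ, rfl⟩
    exact (hasDualToeplitzMatrix_dualToeplitz φ).conj.eq_dualToeplitz rfl
  · have hA := hasDualToeplitzMatrix_of_conj_eq h
    obtain ⟨φ, hφ⟩ := hA.exists_fourierCoeff_eq
    exact ⟨φ, hA.eq_dualToeplitz hφ⟩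

/-- A bounded operator `A` on `(H²)^⊥` is a dual Toeplitz operator iff
`T̃_z A T̃_z̄ = A`. -/
theorem statement3 (A : L2 →L[ℂ] L2) (hA : Pm ∘L A ∘L Pm = A) :
    (∃ φ : Linf, A = dualToeplitz φ) ↔ dualToeplitz zInf ∘L A ∘L dualToeplitz zbarInf = A :=
  statement3_general A

end GSIO
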